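/- For γ > -1, the function u(x) = log(λ²/(1 + c λ² |x|^{2(1+γ)})²) + 2γ log|x|, with c = 1/(8(1+γ)²), satisfies ∫_{ℝ²} e^u dx = 8π(1+γ). -/

import Mathlib

/-!
In polar coordinates the integral equals `2π λ² ∫₀^∞ r^(p-1) / (1 + a r^p)² dr` with
`p = 2(1+γ)` and `a = c λ²`. The integrand is the derivative of `-1 / (a p (1 + a r^p))`,
so the integral is `2π λ² / (a p)`, which is `8π(1+γ)` for the given `c`.
-/

open MeasureTheory Set Filter Topology Real Module

theorem integral_fun_norm_of_finrank_eq_two {E F : Type*} [NormedAddCommGroup E]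
    [InnerProductSpace ℝ E] [FiniteDimensional ℝ E] [MeasurableSpace E] [BorelSpace E]
    [NormedAddCommGroup F] [NormedSpace ℝ F] (hE : finrank ℝ E = 2) (f : ℝ → F) :
    ∫ x : E, f ‖x‖ = (2 * π) • ∫ r in Ioi (0 : ℝ), r • f r := by
  have : Nontrivial E := nontrivial_of_finrank_pos (R := ℝ) (by omega)
  have hball : volume.real (Metric.ball (0 : E) 1) = π := by
    simp [measureReal_def, InnerProductSpace.volume_ball_of_dim_even (k := 1) (by simpa using hE),
      pi_pos.le]
  rw [integral_fun_norm_addHaar, hE, hball, ← smul_assoc, nsmul_eq_mul]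
  norm_num

theorem hasDerivAt_inv_one_add_mul_rpow {a p r : ℝ} (ha : 0 ≤ a) (hr : 0 < r) :
    HasDerivAt (fun r : ℝ => (1 + a * r ^ p)⁻¹)
      (-(a * p) * (r ^ (p - 1) / (1 + a * r ^ p) ^ 2)) r := by
  have hpos : 0 < 1 + a * r ^ p := by positivity
  have hden := ((hasDerivAt_rpow_const (p := p) (Or.inl hr.ne')).const_mul a).const_add 1
  exact (hden.inv hpos.ne').congr_deriv (by ring)

theorem integral_rpow_sub_one_div_one_add_mul_rpow_sq {a p : ℝ} (ha : 0 < a) (hp : 0 < p) :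
    ∫ r in Ioi (0 : ℝ), r ^ (p - 1) / (1 + a * r ^ p) ^ 2 = (a * p)⁻¹ := by
  set F : ℝ → ℝ := fun r => -(a * p)⁻¹ * (1 + a * r ^ p)⁻¹
  have hderiv : ∀ r ∈ Ioi (0 : ℝ), HasDerivAt F (r ^ (p - 1) / (1 + a * r ^ p) ^ 2) r :=
    fun r hr => ((hasDerivAt_inv_one_add_mul_rpow ha.le hr).const_mul _).congr_deriv (by field_simp)
  have hcont : ContinuousWithinAt F (Ici 0) 0 := by
    refine ContinuousAt.continuousWithinAt ?_
    refine continuousAt_const.mul (ContinuousAt.inv₀ ?_ (by simp [zero_rpow hp.ne']))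
    exact continuousAt_const.add ((continuousAt_rpow_const 0 p (Or.inr hp.le)).const_mul a)
  have hnonneg : ∀ r ∈ Ioi (0 : ℝ), 0 ≤ r ^ (p - 1) / (1 + a * r ^ p) ^ 2 := fun r hr =>
    div_nonneg (rpow_nonneg (le_of_lt hr) _) (sq_nonneg _)
  have htop : Tendsto F atTop (𝓝 0) := by
    simpa [F] using ((tendsto_atTop_add_const_left _ 1 ((tendsto_rpow_atTop hp).const_mul_atTop ha)
      ).inv_tendsto_atTop).const_mul (-(a * p)⁻¹)
  rw [integral_Ioi_of_hasDerivAt_of_nonneg hcont hderiv hnonneg htop]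
  simp [F, zero_rpow hp.ne']

/-- For `γ > -1`, with `c = 1/(8(1+γ)²)`, the function
`e^{u(x)} = |x|^{2γ} λ²/(1 + c λ² |x|^{2(1+γ)})²` satisfies `∫_{ℝ²} e^u = 8π(1+γ)`. -/
theorem stmt_2 (lam γ : ℝ) (hlam : 0 < lam) (hγ : -1 < γ)
    (c : ℝ) (hc : c = 1 / (8 * (1 + γ) ^ 2)) :
    ∫ x : EuclideanSpace ℝ (Fin 2),
      ‖x‖ ^ (2 * γ) * lam ^ 2 / (1 + c * lam ^ 2 * ‖x‖ ^ (2 * (1 + γ))) ^ 2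
      = 8 * Real.pi * (1 + γ) := by
  have hγ' : 0 < 1 + γ := by linarith
  have hc' : 0 < c * lam ^ 2 := by rw [hc]; positivity
  have hradial : ∀ r ∈ Ioi (0 : ℝ),
      r • (r ^ (2 * γ) * lam ^ 2 / (1 + c * lam ^ 2 * r ^ (2 * (1 + γ))) ^ 2)
        = lam ^ 2 * (r ^ (2 * (1 + γ) - 1) / (1 + c * lam ^ 2 * r ^ (2 * (1 + γ))) ^ 2) := by
    intro r hr
    rw [show 2 * (1 + γ) - 1 = 2 * γ + 1 by ring, rpow_add_one (ne_of_gt hr), smul_eq_mul]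
    ring
  rw [integral_fun_norm_of_finrank_eq_two (by simp) fun r : ℝ =>
      r ^ (2 * γ) * lam ^ 2 / (1 + c * lam ^ 2 * r ^ (2 * (1 + γ))) ^ 2,
    setIntegral_congr_fun measurableSet_Ioi hradial, integral_const_mul,
    integral_rpow_sub_one_div_one_add_mul_rpow_sq hc' (by positivity), hc, smul_eq_mul]
  field_simp
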